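/- Assume Condition 4: γ is a decreasing function on the closure of (a,b) with 0 < γ(a+) ≤ ∞ and −∞ ≤ γ(b−) < 0, with x₀ := sup{x ∈ (a,b) : γ(x) > 0}; η is positive and locally absolutely continuous on (a,b); γ/η is locally integrable on (a,b) and Q(x) := ∫_{x₀}^x γ(t)/η(t) dt satisfies lim_{x↓a} Q(x) = lim_{x↑b} Q(x) = −∞. Define a probability density p on (a,b) by p(x) = (K/η(x))·exp(Q(x)) with K > 0 the normalizing constant, and let Z have density p. Then E[γ(Z)] = ∫_a^b γ(t)p(t) dt = 0 and η(x) = (1/p(x))·∫_a^x γ(t)p(t) dt for all a < x < b. -/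

import Mathlib

open MeasureTheory Set Filter Topology

noncomputable section

/-- The open interval `(a,b)` with extended-real endpoints, viewed as a set of reals. -/
def ooE (a b : EReal) : Set ℝ := {x : ℝ | a < (x : EReal) ∧ (x : EReal) < b}

/-- The closed interval `[a,b] ∩ ℝ` (the closure of `(a,b)` in `ℝ`). -/
def ccE (a b : EReal) : Set ℝ := {x : ℝ | a ≤ (x : EReal) ∧ (x : EReal) ≤ b}

/-- The filter on `ℝ` of right-neighbourhoods of the (possibly infinite) endpoint `a`:
for finite `a` this is `𝓝[>] a`, for `a = ⊥` it is `atBot`. -/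
def nhdsGT (a : EReal) : Filter ℝ :=
  Filter.comap (fun x : ℝ => (x : EReal)) (nhdsWithin a (Set.Ioi a))

/-- The filter on `ℝ` of left-neighbourhoods of the (possibly infinite) endpoint `b`. -/
def nhdsLT (b : EReal) : Filter ℝ :=
  Filter.comap (fun x : ℝ => (x : EReal)) (nhdsWithin b (Set.Iio b))

/-- `f` is (locally) an indefinite integral of `f'` on `s`. -/
def IsLocACOn (f f' : ℝ → ℝ) (s : Set ℝ) : Prop :=
  ∀ x ∈ s, ∀ y ∈ s, IntervalIntegrable f' volume x y ∧ f y - f x = ∫ t in x..y, f' t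

/-- `f` is locally absolutely continuous on `s`. -/
def LocACOn (f : ℝ → ℝ) (s : Set ℝ) : Prop := ∃ f', IsLocACOn f f' s

/-- Condition 1: `p` is a probability density which is positive and locally absolutely
continuous on `(a,b)` and vanishes outside of `(a,b)`. -/
structure Cond1 (a b : EReal) (p : ℝ → ℝ) : Prop where
  lt : a < b
  meas : Measurable p
  nonneg : ∀ x, 0 ≤ p x
  pos : ∀ x ∈ ooE a b, 0 < p x
  zero : ∀ x, x ∉ ooE a b → p x = 0
  integrable : MeasureTheory.Integrable p
  total : ∫ x, p x = 1
  locAC : LocACOn p (ooE a b)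

/-- Condition 2: `γ` is Borel measurable, not identically zero, decreasing on `[a,b]`,
with `E|γ(Z)| < ∞` and `E[γ(Z)] = 0`. -/
structure Cond2 (a b : EReal) (p γ : ℝ → ℝ) : Prop where
  meas : Measurable γ
  ne_zero : ∃ x ∈ ccE a b, γ x ≠ 0
  anti : AntitoneOn γ (ccE a b)
  integrable : MeasureTheory.Integrable (fun x => γ x * p x)
  mean_zero : ∫ x, γ x * p x = 0

/-- `I(x) = ∫_a^x γ(t) p(t) dt` (the density vanishes outside `(a,b)`). -/
def Ifun (γ p : ℝ → ℝ) (x : ℝ) : ℝ := ∫ t in Iic x, γ t * p t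

/-- The distribution function `F` of the density `p`. -/
def Ffun (p : ℝ → ℝ) (x : ℝ) : ℝ := ∫ t in Iic x, p t

/-- `η = I/p`. -/
def etaFun (γ p : ℝ → ℝ) (x : ℝ) : ℝ := Ifun γ p x / p x

/-- `x₀ = sup {x ∈ (a,b) : γ(x) > 0}`. -/
def xZero (a b : EReal) (γ : ℝ → ℝ) : ℝ := sSup {x | x ∈ ooE a b ∧ 0 < γ x}

/-- `E[h(Z)]` for `Z` with density `p`. -/
def meanOf (p h : ℝ → ℝ) : ℝ := ∫ x, h x * p x

/-- The standard solution `g_h` of the Stein equation `η g' + γ g = h - E[h(Z)]`. -/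
def gsol (γ p h : ℝ → ℝ) (x : ℝ) : ℝ :=
  (∫ t in Iic x, (h t - meanOf p h) * p t) / (p x * etaFun γ p x)

/-- The derivative of the standard solution, defined everywhere via the Stein equation. -/
def gsol' (γ p h : ℝ → ℝ) (x : ℝ) : ℝ :=
  (h x - meanOf p h - γ x * gsol γ p h x) / etaFun γ p x

/-!
With `f = γ/η`, the function `exp ∘ Q` is locally absolutely continuous on `(a,b)` with
derivative `f · exp Q` (chain rule for a `C¹` function of the absolutely continuous primitive `Q`).
Since `γ` decreases and changes sign, `f · exp Q` is nonnegative near `a` and nonpositive near `b`,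
so monotone convergence upgrades `∫_x^y f exp Q = exp Q(y) - exp Q(x)` to the improper identities
`∫_{(a,x]} f exp Q = exp Q(x)` and `∫_{(a,b)} f exp Q = 0`, using `exp Q → 0` at both ends.
Both claims follow because `γ p = f exp Q / K` on `(a,b)`.
-/

theorem LipschitzOnWith.comp_absolutelyContinuousOnInterval {X Y : Type*} [PseudoMetricSpace X]
    [PseudoMetricSpace Y] {g : X → Y} {f : ℝ → X} {K : NNReal} {t : Set X} {a b : ℝ}
    (hg : LipschitzOnWith K g t) (hf : AbsolutelyContinuousOnInterval f a b)
    (hft : MapsTo f (uIcc a b) t) : AbsolutelyContinuousOnInterval (g ∘ f) a b := by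
  unfold AbsolutelyContinuousOnInterval at hf ⊢
  refine squeeze_zero' (Eventually.of_forall fun _ => Finset.sum_nonneg fun _ _ => dist_nonneg)
    ?_ (by simpa using hf.const_mul (K : ℝ))
  rw [eventually_inf_principal]
  refine Eventually.of_forall fun E hE => ?_
  rw [Finset.mul_sum]
  exact Finset.sum_le_sum fun i hi =>
    hg.dist_le_mul _ (hft (hE.1 i hi).1) _ (hft (hE.1 i hi).2)

theorem ContDiff.comp_absolutelyContinuousOnInterval {g f : ℝ → ℝ} {a b : ℝ}
    (hg : ContDiff ℝ 1 g) (hf : AbsolutelyContinuousOnInterval f a b) :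
    AbsolutelyContinuousOnInterval (g ∘ f) a b := by
  obtain ⟨C, hC⟩ := hf.exists_bound
  obtain ⟨K, hK⟩ := hg.contDiffOn.exists_lipschitzOnWith one_ne_zero (convex_Icc (-C) C)
    isCompact_Icc
  exact hK.comp_absolutelyContinuousOnInterval hf fun x hx => abs_le.1 (hC x hx)

theorem IntervalIntegrable.integral_deriv_comp_primitive_mul {f g : ℝ → ℝ} {a b : ℝ}
    (hf : IntervalIntegrable f volume a b) (hg : ContDiff ℝ 1 g) :
    ∫ t in a..b, deriv g (∫ s in a..t, f s) * f t = g (∫ s in a..b, f s) - g 0 := by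
  have hFTC := (hg.comp_absolutelyContinuousOnInterval
    (hf.absolutelyContinuousOnInterval_intervalIntegral left_mem_uIcc)).integral_deriv_eq_sub
  simp only [Function.comp_apply, intervalIntegral.integral_same] at hFTC
  rw [← hFTC]
  refine intervalIntegral.integral_congr_ae ?_
  filter_upwards [hf.ae_hasDerivAt_integral] with t ht htab
  have hP := ht (uIoc_subset_uIcc htab) a left_mem_uIcc
  exact ((hg.differentiable one_ne_zero _).hasDerivAt.comp t hP).deriv.symm

theorem IsLocACOn.continuousOn_uIcc {F f : ℝ → ℝ} {s : Set ℝ} (h : IsLocACOn F f s) {x y : ℝ}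
    (hx : x ∈ s) (hxy : uIcc x y ⊆ s) : ContinuousOn F (uIcc x y) :=
  ((continuousOn_const (c := F x)).add (intervalIntegral.continuousOn_primitive_interval'
    (h x hx y (hxy right_mem_uIcc)).1 left_mem_uIcc)).congr fun t ht =>
      (sub_eq_iff_eq_add').1 (h x hx t (hxy ht)).2

theorem IsLocACOn.continuousOn {F f : ℝ → ℝ} {s : Set ℝ} (h : IsLocACOn F f s) (hs : IsOpen s) :
    ContinuousOn F s := by
  intro z hz
  obtain ⟨x, y, hzxy, hnhds, hsub⟩ := exists_Icc_mem_subset_of_mem_nhds (hs.mem_nhds hz)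
  rw [← uIcc_of_le (hzxy.1.trans hzxy.2)] at hnhds hsub
  exact ((h.continuousOn_uIcc (hsub left_mem_uIcc) hsub).continuousAt hnhds).continuousWithinAt

theorem isLocACOn_exp_primitive {f : ℝ → ℝ} {s : Set ℝ} (hs : s.OrdConnected) {x₀ : ℝ}
    (hx₀ : x₀ ∈ s) (hf : ∀ x ∈ s, ∀ y ∈ s, IntervalIntegrable f volume x y) :
    IsLocACOn (fun x => Real.exp (∫ t in x₀..x, f t))
      (fun t => f t * Real.exp (∫ r in x₀..t, f r)) s := by
  intro x hx y hy
  have hQ : ∀ t ∈ uIcc x y, ∫ r in x₀..t, f r = (∫ r in x₀..x, f r) + ∫ r in x..t, f r :=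
    fun t ht => (intervalIntegral.integral_add_adjacent_intervals (hf x₀ hx₀ x hx)
      (hf x hx t (hs.uIcc_subset hx hy ht))).symm
  have hexp : ContDiff ℝ 1 fun r => Real.exp ((∫ r in x₀..x, f r) + r) :=
    Real.contDiff_exp.comp (contDiff_const.add contDiff_id)
  have hderiv : ∀ r, deriv (fun r => Real.exp ((∫ r in x₀..x, f r) + r)) r =
      Real.exp ((∫ r in x₀..x, f r) + r) := fun r => by
    simpa using ((hasDerivAt_id r).const_add (∫ r in x₀..x, f r)).exp.deriv
  have hcont : ContinuousOn (fun t => Real.exp (∫ r in x₀..t, f r)) (uIcc x y) :=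
    Real.continuous_exp.comp_continuousOn <|
      (continuousOn_const.add (intervalIntegral.continuousOn_primitive_interval'
        (hf x hx y hy) left_mem_uIcc)).congr hQ
  refine ⟨(hf x hx y hy).mul_continuousOn hcont, ?_⟩
  have key := (hf x hx y hy).integral_deriv_comp_primitive_mul hexp
  simp only [hderiv, add_zero] at key
  rw [← hQ y right_mem_uIcc] at key
  rw [← key]
  refine intervalIntegral.integral_congr fun t ht => ?_
  simp only [hQ t ht, mul_comm]

theorem integrableOn_and_setIntegral_eq_of_tendsto_of_nonneg {α : Type*} [MeasurableSpace α]
    {μ : Measure α} {S : Set α} {u : α → ℝ} {φ : ℕ → Set α} {L : ℝ} (hS : MeasurableSet S)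
    (hφ : ∀ n, MeasurableSet (φ n)) (hφS : ∀ n, φ n ⊆ S) (hcover : ∀ t ∈ S, ∀ᶠ n in atTop, t ∈ φ n)
    (hint : ∀ n, IntegrableOn u (φ n) μ) (hu : ∀ t ∈ S, 0 ≤ u t)
    (hlim : Tendsto (fun n => ∫ t in φ n, u t ∂μ) atTop (𝓝 L)) :
    IntegrableOn u S μ ∧ ∫ t in S, u t ∂μ = L := by
  have hAE : AECover (μ.restrict S) atTop φ :=
    aecover_restrict_of_ae_imp hS (ae_of_all _ hcover) hφ
  have hres : ∀ n, (μ.restrict S).restrict (φ n) = μ.restrict (φ n) := fun n => by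
    rw [Measure.restrict_restrict (hφ n), inter_eq_self_of_subset_left (hφS n)]
  simp only [IntegrableOn, ← hres] at hint hlim
  have hInt := hAE.integrable_of_integral_tendsto_of_nonneg_ae L hint
    ((ae_restrict_iff' hS).2 (ae_of_all _ hu)) hlim
  exact ⟨hInt, hAE.integral_eq_of_tendsto L hInt hlim⟩

theorem IsOpen.setIntegral_pos {X : Type*} [TopologicalSpace X] [MeasurableSpace X]
    [OpensMeasurableSpace X] {μ : Measure X} [μ.IsOpenPosMeasure] {U : Set X} {g : X → ℝ}
    (hU : IsOpen U) (hne : U.Nonempty) (hg : IntegrableOn g U μ) (hpos : ∀ t ∈ U, 0 < g t) :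
    0 < ∫ t in U, g t ∂μ := by
  refine (setIntegral_pos_iff_support_of_nonneg_ae
    (ae_restrict_of_forall_mem hU.measurableSet fun t ht => (hpos t ht).le) hg).2 ?_
  rw [inter_eq_right.2 (show U ⊆ Function.support g from fun t ht => (hpos t ht).ne')]
  exact hU.measure_pos μ hne

theorem IntegrableOn.of_mul_of_le_abs {α : Type*} [MeasurableSpace α] {μ : Measure α}
    {S : Set α} {γ g : α → ℝ} {δ : ℝ} (hγg : IntegrableOn (fun t => γ t * g t) S μ)
    (hg : AEStronglyMeasurable g (μ.restrict S)) (hS : MeasurableSet S) (hδ : 0 < δ)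
    (hγ : ∀ t ∈ S, δ ≤ |γ t|) : IntegrableOn g S μ := by
  refine Integrable.mono' (hγg.norm.div_const δ) hg
    ((ae_restrict_iff' hS).2 (ae_of_all _ fun t ht => ?_))
  rw [le_div_iff₀ hδ, norm_mul, Real.norm_eq_abs, Real.norm_eq_abs, mul_comm |γ t|]
  exact mul_le_mul_of_nonneg_left (hγ t ht) (abs_nonneg _)

theorem ordConnected_ooE (a b : EReal) : (ooE a b).OrdConnected :=
  ordConnected_Ioo.preimage_mono EReal.coe_strictMono.monotone

theorem isOpen_ooE (a b : EReal) : IsOpen (ooE a b) :=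
  isOpen_Ioo.preimage continuous_coe_real_ereal

theorem ooE_subset_ccE (a b : EReal) : ooE a b ⊆ ccE a b := fun _ ht => ⟨ht.1.le, ht.2.le⟩

theorem exists_seq_tendsto_nhdsGT {a : EReal} {x : ℝ} (h : a < x) :
    ∃ w : ℕ → ℝ, (∀ n, a < w n ∧ w n < x) ∧ Tendsto w atTop (nhdsGT a) := by
  obtain ⟨v, -, hv, hlim⟩ := exists_seq_strictAnti_tendsto' h
  have hcoe : ∀ n, ((v n).toReal : EReal) = v n := fun n =>
    EReal.coe_toReal (hv n).2.ne_top (hv n).1.ne_bot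
  refine ⟨fun n => (v n).toReal, fun n => ?_, tendsto_comap_iff.2 ?_⟩
  · rw [← EReal.coe_lt_coe_iff, hcoe]; exact hv n
  · simp only [Function.comp_def, hcoe]
    exact tendsto_nhdsWithin_iff.2 ⟨hlim, Eventually.of_forall fun n => (hv n).1⟩

theorem exists_seq_tendsto_nhdsLT {b : EReal} {x : ℝ} (h : x < b) :
    ∃ w : ℕ → ℝ, (∀ n, x < w n ∧ w n < b) ∧ Tendsto w atTop (nhdsLT b) := by
  obtain ⟨v, -, hv, hlim⟩ := exists_seq_strictMono_tendsto' h
  have hcoe : ∀ n, ((v n).toReal : EReal) = v n := fun n =>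
    EReal.coe_toReal (hv n).2.ne_top (hv n).1.ne_bot
  refine ⟨fun n => (v n).toReal, fun n => ?_, tendsto_comap_iff.2 ?_⟩
  · rw [← EReal.coe_lt_coe_iff, hcoe]; exact hv n
  · simp only [Function.comp_def, hcoe]
    exact tendsto_nhdsWithin_iff.2 ⟨hlim, Eventually.of_forall fun n => (hv n).2⟩

namespace IsLocACOn

variable {a b : EReal} {F u : ℝ → ℝ}

theorem setIntegral_ooE_inter_Iic_of_nonneg (h : IsLocACOn F u (ooE a b))
    (hF : Tendsto F (nhdsGT a) (𝓝 0)) {x : ℝ} (hx : x ∈ ooE a b)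
    (hu : ∀ t ∈ ooE a b, t ≤ x → 0 ≤ u t) :
    IntegrableOn u (ooE a b ∩ Iic x) ∧ ∫ t in ooE a b ∩ Iic x, u t = F x := by
  obtain ⟨w, hw, hwlim⟩ := exists_seq_tendsto_nhdsGT hx.1
  have hws : ∀ n, w n ∈ ooE a b := fun n =>
    ⟨(hw n).1, (EReal.coe_lt_coe_iff.2 (hw n).2).trans hx.2⟩
  have hle : ∀ n, w n ≤ x := fun n => (hw n).2.le
  refine integrableOn_and_setIntegral_eq_of_tendsto_of_nonneg (φ := fun n => Ioc (w n) x)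
    ((isOpen_ooE a b).measurableSet.inter measurableSet_Iic) (fun _ => measurableSet_Ioc)
    (fun n t ht => ⟨(ordConnected_ooE a b).out (hws n) hx ⟨ht.1.le, ht.2⟩, ht.2⟩)
    (fun t ht => ?_)
    (fun n => (intervalIntegrable_iff_integrableOn_Ioc_of_le (hle n)).1 (h (w n) (hws n) x hx).1)
    (fun t ht => hu t ht.1 ht.2) ?_
  · filter_upwards [hwlim.eventually
      (preimage_mem_comap (nhdsWithin_le_nhds (Iio_mem_nhds ht.1.1)))] with n hn
    exact ⟨EReal.coe_lt_coe_iff.1 hn, ht.2⟩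
  · simp_rw [← intervalIntegral.integral_of_le (hle _), ← (h _ (hws _) x hx).2]
    simpa using tendsto_const_nhds.sub (hF.comp hwlim)

theorem setIntegral_ooE_inter_Ioi_of_nonpos (h : IsLocACOn F u (ooE a b))
    (hF : Tendsto F (nhdsLT b) (𝓝 0)) {x : ℝ} (hx : x ∈ ooE a b)
    (hu : ∀ t ∈ ooE a b, x < t → u t ≤ 0) :
    IntegrableOn u (ooE a b ∩ Ioi x) ∧ ∫ t in ooE a b ∩ Ioi x, u t = -F x := by
  obtain ⟨w, hw, hwlim⟩ := exists_seq_tendsto_nhdsLT hx.2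
  have hws : ∀ n, w n ∈ ooE a b := fun n =>
    ⟨hx.1.trans (EReal.coe_lt_coe_iff.2 (hw n).1), (hw n).2⟩
  have hle : ∀ n, x ≤ w n := fun n => (hw n).1.le
  have hneg := integrableOn_and_setIntegral_eq_of_tendsto_of_nonneg (u := fun t => -u t)
    (φ := fun n => Ioc x (w n))
    ((isOpen_ooE a b).measurableSet.inter measurableSet_Ioi) (fun _ => measurableSet_Ioc)
    (fun n t ht => ⟨(ordConnected_ooE a b).out hx (hws n) ⟨ht.1.le, ht.2⟩, ht.1⟩)
    (fun t ht => ?_)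
    (fun n => ((intervalIntegrable_iff_integrableOn_Ioc_of_le (hle n)).1
      (h x hx (w n) (hws n)).1).neg)
    (fun t ht => neg_nonneg.2 (hu t ht.1 ht.2)) (L := F x) ?_
  · rw [integral_neg, neg_eq_iff_eq_neg] at hneg
    exact ⟨by simpa using hneg.1.neg, hneg.2⟩
  · filter_upwards [hwlim.eventually
      (preimage_mem_comap (nhdsWithin_le_nhds (Ioi_mem_nhds ht.1.2)))] with n hn
    exact ⟨ht.2, (EReal.coe_lt_coe_iff.1 hn).le⟩
  · simp_rw [integral_neg, ← intervalIntegral.integral_of_le (hle _), ← (h x hx _ (hws _)).2]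
    simpa using (hF.comp hwlim).sub_const (F x) |>.neg

theorem setIntegral_ooE_inter_Iic (h : IsLocACOn F u (ooE a b))
    (hF : Tendsto F (nhdsGT a) (𝓝 0)) {c : ℝ} (hc : c ∈ ooE a b)
    (hu : ∀ t ∈ ooE a b, t ≤ c → 0 ≤ u t) {x : ℝ} (hx : x ∈ ooE a b) :
    IntegrableOn u (ooE a b ∩ Iic x) ∧ ∫ t in ooE a b ∩ Iic x, u t = F x := by
  have hz : min c x ∈ ooE a b := min_rec' _ hc hx
  have hzx : min c x ≤ x := min_le_right c x
  obtain ⟨hint, hval⟩ := h.setIntegral_ooE_inter_Iic_of_nonneg hF hz fun t ht htz =>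
    hu t ht (htz.trans (min_le_left c x))
  have hIoc : IntegrableOn u (Ioc (min c x) x) :=
    (intervalIntegrable_iff_integrableOn_Ioc_of_le hzx).1 (h _ hz x hx).1
  have hsplit : ooE a b ∩ Iic x = (ooE a b ∩ Iic (min c x)) ∪ Ioc (min c x) x := by
    rw [← Iic_union_Ioc_eq_Iic hzx, inter_union_distrib_left,
      (inter_eq_right (s := ooE a b) (t := Ioc (min c x) x)).2 fun t ht =>
        (ordConnected_ooE a b).out hz hx ⟨ht.1.le, ht.2⟩]
  rw [hsplit, setIntegral_union (disjoint_left.2 fun t ht ht' => not_lt.2 ht.2 ht'.1)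
    measurableSet_Ioc hint hIoc, hval, ← intervalIntegral.integral_of_le hzx, ← (h _ hz x hx).2]
  exact ⟨hint.union hIoc, add_sub_cancel _ _⟩

theorem setIntegral_ooE_eq_zero (h : IsLocACOn F u (ooE a b))
    (hFa : Tendsto F (nhdsGT a) (𝓝 0)) (hFb : Tendsto F (nhdsLT b) (𝓝 0)) {c d : ℝ}
    (hc : c ∈ ooE a b) (hd : d ∈ ooE a b) (huc : ∀ t ∈ ooE a b, t ≤ c → 0 ≤ u t)
    (hud : ∀ t ∈ ooE a b, d < t → u t ≤ 0) :
    IntegrableOn u (ooE a b) ∧ ∫ t in ooE a b, u t = 0 := by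
  obtain ⟨hintL, hvalL⟩ := h.setIntegral_ooE_inter_Iic hFa hc huc hd
  obtain ⟨hintR, hvalR⟩ := h.setIntegral_ooE_inter_Ioi_of_nonpos hFb hd hud
  have hsplit : ooE a b = (ooE a b ∩ Iic d) ∪ (ooE a b ∩ Ioi d) := by
    rw [← inter_union_distrib_left, Iic_union_Ioi, inter_univ]
  rw [hsplit, setIntegral_union
    (disjoint_left.2 fun t ht ht' => not_lt.2 ht.2 (mem_Ioi.1 ht'.2))
    ((isOpen_ooE a b).measurableSet.inter measurableSet_Ioi) hintL hintR, hvalL, hvalR]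
  exact ⟨hintL.union hintR, add_neg_cancel _⟩

end IsLocACOn

section Antitone

variable {a b : EReal} {γ : ℝ → ℝ} {c d : ℝ}

theorem xZero_mem_ooE (hanti : AntitoneOn γ (ooE a b)) (hc : c ∈ ooE a b) (hγc : 0 < γ c)
    (hd : d ∈ ooE a b) (hγd : γ d < 0) : xZero a b γ ∈ ooE a b := by
  have hbdd : ∀ t ∈ {x | x ∈ ooE a b ∧ 0 < γ x}, t ≤ d := fun t ht =>
    le_of_not_gt fun hdt => (hanti hd ht.1 hdt.le).not_gt (hγd.trans ht.2)
  exact (ordConnected_ooE a b).out hc hd ⟨le_csSup ⟨d, hbdd⟩ ⟨hc, hγc⟩, csSup_le ⟨c, hc, hγc⟩ hbdd⟩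

theorem integrableOn_ooE_of_mul_of_antitoneOn {g : ℝ → ℝ} (hanti : AntitoneOn γ (ooE a b))
    (hg : ContinuousOn g (ooE a b)) (hγg : IntegrableOn (fun t => γ t * g t) (ooE a b))
    (hc : c ∈ ooE a b) (hγc : 0 < γ c) (hd : d ∈ ooE a b) (hγd : γ d < 0) :
    IntegrableOn g (ooE a b) := by
  have hs := (isOpen_ooE a b).measurableSet
  have hleft : IntegrableOn g (ooE a b ∩ Iic c) :=
    IntegrableOn.of_mul_of_le_abs (hγg.mono_set inter_subset_left)
      ((hg.mono inter_subset_left).aestronglyMeasurable (hs.inter measurableSet_Iic))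
      (hs.inter measurableSet_Iic) hγc fun t ht => (hanti ht.1 hc ht.2).trans (le_abs_self _)
  have hright : IntegrableOn g (ooE a b ∩ Ici d) :=
    IntegrableOn.of_mul_of_le_abs (hγg.mono_set inter_subset_left)
      ((hg.mono inter_subset_left).aestronglyMeasurable (hs.inter measurableSet_Ici))
      (hs.inter measurableSet_Ici) (neg_pos.2 hγd)
      fun t ht => (neg_le_neg (hanti hd ht.1 ht.2)).trans (neg_le_abs _)
  have hmid : IntegrableOn g (Icc c d) :=
    (hg.mono ((ordConnected_ooE a b).out hc hd)).integrableOn_Icc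
  refine (hleft.union (hmid.union hright)).mono_set fun t ht => ?_
  rcases le_or_gt t c with htc | hct
  · exact Or.inl ⟨ht, htc⟩
  rcases le_or_gt t d with htd | hdt
  · exact Or.inr (Or.inl ⟨hct.le, htd⟩)
  · exact Or.inr (Or.inr ⟨ht, hdt.le⟩)

theorem setIntegral_ooE_div_pos {η E : ℝ → ℝ} (hanti : AntitoneOn γ (ooE a b))
    (hη : LocACOn η (ooE a b)) (hηpos : ∀ t ∈ ooE a b, 0 < η t) (hE : ContinuousOn E (ooE a b))
    (hEpos : ∀ t, 0 < E t) (hint : IntegrableOn (fun t => γ t / η t * E t) (ooE a b))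
    (hc : c ∈ ooE a b) (hγc : 0 < γ c) (hd : d ∈ ooE a b) (hγd : γ d < 0) :
    0 < ∫ t in ooE a b, E t / η t := by
  obtain ⟨η', hη'⟩ := hη
  refine (isOpen_ooE a b).setIntegral_pos ⟨c, hc⟩ ?_ fun t ht => div_pos (hEpos t) (hηpos t ht)
  refine integrableOn_ooE_of_mul_of_antitoneOn hanti ?_ ?_ hc hγc hd hγd
  · exact hE.div (hη'.continuousOn (isOpen_ooE a b)) fun t ht => (hηpos t ht).ne'
  · exact hint.congr_fun (fun t _ => by ring) (isOpen_ooE a b).measurableSet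

end Antitone

theorem thm_eta_gamma_density_general (a b : EReal) (γ η : ℝ → ℝ)
    (hanti : AntitoneOn γ (ccE a b))
    (hposγ : ∃ x ∈ ooE a b, 0 < γ x)
    (hnegγ : ∃ x ∈ ooE a b, γ x < 0)
    (hηpos : ∀ x ∈ ooE a b, 0 < η x)
    (hηAC : LocACOn η (ooE a b))
    (hlocint : ∀ x ∈ ooE a b, ∀ y ∈ ooE a b,
      IntervalIntegrable (fun t => γ t / η t) volume x y)
    (Q : ℝ → ℝ) (hQ : Q = fun x => ∫ t in (xZero a b γ)..x, γ t / η t)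
    (hQa : Tendsto Q (nhdsGT a) atBot) (hQb : Tendsto Q (nhdsLT b) atBot)
    (p : ℝ → ℝ)
    (hp : p = Set.indicator (ooE a b)
        (fun x => (Real.exp (Q x) / η x) / (∫ y in ooE a b, Real.exp (Q y) / η y))) :
    (MeasureTheory.Integrable (fun x => γ x * p x) ∧ ∫ x, γ x * p x = 0) ∧
    ∀ x ∈ ooE a b, η x = (∫ t in Iic x, γ t * p t) / p x := by
  obtain ⟨c, hc, hγc⟩ := hposγ
  obtain ⟨d, hd, hγd⟩ := hnegγ
  have hanti' := hanti.mono (ooE_subset_ccE a b)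
  have hs := (isOpen_ooE a b).measurableSet
  have hE : IsLocACOn (fun x => Real.exp (Q x)) (fun t => γ t / η t * Real.exp (Q t)) (ooE a b) :=
    hQ ▸ isLocACOn_exp_primitive (ordConnected_ooE a b) (xZero_mem_ooE hanti' hc hγc hd hγd)
      hlocint
  have hEa := Real.tendsto_exp_atBot.comp hQa
  have huc : ∀ t ∈ ooE a b, t ≤ c → 0 ≤ γ t / η t * Real.exp (Q t) := fun t ht htc =>
    mul_nonneg (div_nonneg (hγc.le.trans (hanti' ht hc htc)) (hηpos t ht).le) (Real.exp_pos _).le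
  have hud : ∀ t ∈ ooE a b, d < t → γ t / η t * Real.exp (Q t) ≤ 0 := fun t ht hdt =>
    mul_nonpos_of_nonpos_of_nonneg (div_nonpos_of_nonpos_of_nonneg
      ((hanti' hd ht hdt.le).trans hγd.le) (hηpos t ht).le) (Real.exp_pos _).le
  obtain ⟨hint, hzero⟩ := hE.setIntegral_ooE_eq_zero hEa
    (Real.tendsto_exp_atBot.comp hQb) hc hd huc hud
  have hK := setIntegral_ooE_div_pos hanti' hηAC hηpos (hE.continuousOn (isOpen_ooE a b))
    (fun _ => Real.exp_pos _) hint hc hγc hd hγd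
  have hγp : (fun t => γ t * p t) = (ooE a b).indicator
      (fun t => γ t / η t * Real.exp (Q t) / ∫ y in ooE a b, Real.exp (Q y) / η y) := by
    funext t
    by_cases ht : t ∈ ooE a b
    · simp only [hp, indicator_of_mem ht]; ring
    · simp only [hp, indicator_of_notMem ht, mul_zero]
  refine ⟨⟨?_, ?_⟩, fun x hx => ?_⟩
  · rw [hγp]; exact IntegrableOn.integrable_indicator (hint.div_const _) hs
  · rw [hγp, integral_indicator hs, integral_div, hzero, zero_div]
  · rw [hγp, setIntegral_indicator hs, inter_comm, integral_div,
      (hE.setIntegral_ooE_inter_Iic hEa hc huc hx).2, hp, indicator_of_mem hx]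
    field_simp

/-- Under Condition 4, the density `p = (K/η) exp(Q)` built from the coefficients `γ` and
`η` satisfies `E[γ(Z)] = 0` and `η(x) = (1/p(x)) ∫_a^x γ(t) p(t) dt` on `(a,b)`. -/
theorem thm_eta_gamma_density (a b : EReal) (γ η : ℝ → ℝ)
    (hab : a < b)
    (hanti : AntitoneOn γ (ccE a b))
    (hposγ : ∃ x ∈ ooE a b, 0 < γ x)
    (hnegγ : ∃ x ∈ ooE a b, γ x < 0)
    (hηpos : ∀ x ∈ ooE a b, 0 < η x)
    (hηAC : LocACOn η (ooE a b))
    (hlocint : ∀ x ∈ ooE a b, ∀ y ∈ ooE a b,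
      IntervalIntegrable (fun t => γ t / η t) volume x y)
    (Q : ℝ → ℝ) (hQ : Q = fun x => ∫ t in (xZero a b γ)..x, γ t / η t)
    (hQa : Tendsto Q (nhdsGT a) atBot) (hQb : Tendsto Q (nhdsLT b) atBot)
    (p : ℝ → ℝ)
    (hp : p = Set.indicator (ooE a b)
        (fun x => (Real.exp (Q x) / η x) / (∫ y in ooE a b, Real.exp (Q y) / η y))) :
    (MeasureTheory.Integrable (fun x => γ x * p x) ∧ ∫ x, γ x * p x = 0) ∧
    ∀ x ∈ ooE a b, η x = (∫ t in Iic x, γ t * p t) / p x :=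
  thm_eta_gamma_density_general a b γ η hanti hposγ hnegγ hηpos hηAC hlocint Q hQ hQa hQb p hp
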